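/- Let 0 ≤ p ≤ n. There exists an operator field H : ℝⁿ → End(Λᵖℝⁿ) whose matrix entries x ↦ ⟨H(x)α, β⟩ are homogeneous harmonic quadratic polynomials for all constant α, β ∈ Λᵖℝⁿ, such that for all x ≠ 0: Π_x = ((n-p)/n) I + |x|^{-2} H(x) and Φ_x = (p/n) I − |x|^{-2} H(x), as operators on Λᵖℝⁿ. -/

import Mathlib

noncomputable section
open scoped RealInnerProductSpace BigOperators FourierTransform
open MeasureTheory

namespace Xray

/-- Euclidean space `ℝⁿ`. -/
abbrev V (n : ℕ) := EuclideanSpace ℝ (Fin n)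

/-- Concrete model for the full exterior algebra `Λ*ℝⁿ`, with the inner product that
makes the standard basis multivectors `e_s` (indexed by subsets `s` of `{1,…,n}`)
orthonormal. -/
abbrev Ext (n : ℕ) := EuclideanSpace ℝ (Finset (Fin n))

variable {n : ℕ}

/-- Sign produced when moving `e_i` past the basis multivector `e_s`. -/
def esign (s : Finset (Fin n)) (i : Fin n) : ℝ :=
  (-1 : ℝ) ^ (s.filter (fun j => j < i)).card

/-- Left exterior multiplication `α ↦ x ∧ α` in the concrete model. -/
def wedgeVec (x : V n) : Ext n →ₗ[ℝ] Ext n where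
  toFun α := (EuclideanSpace.equiv (Finset (Fin n)) ℝ).symm
    (fun s => ∑ i ∈ s, (esign (s.erase i) i * x i) * α (s.erase i))
  map_add' α β := by
    ext s
    simp [mul_add, Finset.sum_add_distrib]
  map_smul' c α := by
    ext s
    simp [Finset.mul_sum]
    ring_nf
    simp [mul_comm, mul_left_comm]
    simp [mul_assoc]

/-- The interior product `α ⌟ x`, i.e. the adjoint of left exterior
multiplication by `x` with respect to the inner product. -/
def intProd (x : V n) : Ext n →ₗ[ℝ] Ext n := LinearMap.adjoint (wedgeVec x)

/-- The wedge product of a list of vectors, as an element of `Λ*ℝⁿ`. -/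
def wedgeList (l : List (V n)) : Ext n :=
  l.foldr (fun v a => wedgeVec v a) (EuclideanSpace.single ∅ 1)

/-- `Λ*P ⊆ Λ*ℝⁿ`: the subspace spanned by wedge products of vectors of the
subspace `P ⊆ ℝⁿ`. -/
def extSub (P : Submodule ℝ (V n)) : Submodule ℝ (Ext n) :=
  Submodule.span ℝ {α | ∃ l : List (V n), (∀ v ∈ l, v ∈ P) ∧ α = wedgeList l}

/-- The orthogonal projection of `Λ*ℝⁿ` onto a subspace, viewed as an
endomorphism of `Λ*ℝⁿ`. -/
def subProj (K : Submodule ℝ (Ext n)) : Ext n →ₗ[ℝ] Ext n :=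
  K.subtype ∘ₗ (K.orthogonalProjectionOnto).toLinearMap

/-- `α ↦ α|_P`, the orthogonal projection of a multivector onto `Λ*P`. -/
def projExt (P : Submodule ℝ (V n)) : Ext n →ₗ[ℝ] Ext n := subProj (extSub P)

/-- The hyperplane orthogonal to `x`. -/
def hyp (x : V n) : Submodule ℝ (V n) := (ℝ ∙ x)ᗮ

/-- `Π_x` : orthogonal projection of `Λ*ℝⁿ` onto `Λ*H_x`. -/
def PiOp (x : V n) : Ext n →ₗ[ℝ] Ext n := projExt (hyp x)

/-- `Φ_x` : orthogonal projection of `Λ*ℝⁿ` onto `x ∧ Λ*H_x`. -/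
def PhiOp (x : V n) : Ext n →ₗ[ℝ] Ext n :=
  subProj (Submodule.map (wedgeVec x) (extSub (hyp x)))

/-- The degree-`p` summand `Λᵖℝⁿ ⊆ Λ*ℝⁿ`. -/
def grade (n p : ℕ) : Submodule ℝ (Ext n) :=
  Submodule.span ℝ {α | ∃ s : Finset (Fin n), s.card = p ∧ α = EuclideanSpace.single s 1}

/-- The `m`-dimensional volume of the unit sphere `S^m ⊂ ℝ^{m+1}`. -/
def sphereVol (m : ℕ) : ℝ :=
  2 * Real.pi ^ ((m + 1 : ℝ) / 2) / Real.Gamma ((m + 1 : ℝ) / 2)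

end Xray

/-! Write `ε_x` for exterior and `ι_x` for interior multiplication by `x`. The Clifford relation
`ι_x ε_y + ε_y ι_x = ⟪x, y⟫` shows that `ι_x` kills `Λ H_x`, that `Λℝⁿ = Λ H_x ⊕ x ∧ Λ H_x`
(orthogonally), so that `|x|² Π_x = ι_x ε_x` and `Φ_x = 1 - Π_x`. The quadratic field
`x ↦ ι_x ε_x` becomes harmonic after subtracting `|x|²` times its average over the coordinate
directions, `(1/n) ∑ⱼ ι_{eⱼ} ε_{eⱼ}`, which on `Λᵖℝⁿ` is the scalar `(n - p)/n`: each `e_s` with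
`|s| = p` survives `ι_{eⱼ} ε_{eⱼ}` exactly for the `n - p` indices `j ∉ s`. -/

namespace Xray

variable {n : ℕ}

lemma esign_erase_self (s : Finset (Fin n)) (i : Fin n) : esign (s.erase i) i = esign s i := by
  unfold esign
  rw [Finset.filter_erase, Finset.erase_eq_of_notMem (by simp)]

lemma esign_insert {k : Fin n} {u : Finset (Fin n)} (hk : k ∉ u) (j : Fin n) :
    esign (insert k u) j = (if k < j then -1 else 1) * esign u j := by
  unfold esign
  rw [Finset.filter_insert]
  split_ifs
  · rw [Finset.card_insert_of_notMem (by simp [hk]), pow_succ, mul_comm]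
  · rw [one_mul]

lemma esign_mul_self (s : Finset (Fin n)) (i : Fin n) : esign s i * esign s i = 1 := by
  rw [esign, ← pow_add, ← two_mul, pow_mul]
  simp

lemma esign_of_mem {s : Finset (Fin n)} {j : Fin n} (hj : j ∈ s) (i : Fin n) :
    esign s i = (if j < i then -1 else 1) * esign (s.erase j) i := by
  conv_lhs => rw [← Finset.insert_erase hj]
  exact esign_insert (Finset.notMem_erase j s) i

lemma esign_mul_esign_insert_erase {s : Finset (Fin n)} {i j : Fin n} (hi : i ∉ s) (hj : j ∈ s) :
    esign s i * esign (insert i (s.erase j)) j = -(esign (s.erase j) j * esign (s.erase j) i) := by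
  have hij : i ≠ j := by rintro rfl; exact hi hj
  rw [esign_of_mem hj i, esign_insert (fun h => hi (Finset.mem_of_mem_erase h)) j]
  rcases hij.lt_or_gt with h | h <;> simp only [h, h.asymm, if_true, if_false] <;> ring

lemma esign_mul_esign_erase_erase {s : Finset (Fin n)} {i j : Fin n} (hi : i ∈ s) (hj : j ∈ s)
    (hij : i ≠ j) :
    esign (s.erase i) i * esign ((s.erase i).erase j) j
      = -(esign (s.erase j) j * esign ((s.erase j).erase i) i) := by
  rw [esign_erase_self, esign_erase_self, esign_erase_self, esign_erase_self,
    esign_of_mem hi j, esign_of_mem hj i]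
  rcases hij.lt_or_gt with h | h <;> simp only [h, h.asymm, if_true, if_false] <;> ring

lemma wedgeVec_apply (x : V n) (α : Ext n) (s : Finset (Fin n)) :
    wedgeVec x α s = ∑ i ∈ s, esign (s.erase i) i * x i * α (s.erase i) := rfl

lemma wedgeVec_single (x : V n) (s : Finset (Fin n)) :
    wedgeVec x (EuclideanSpace.single s 1) =
      ∑ i ∈ sᶜ, (esign s i * x i) • EuclideanSpace.single (insert i s) (1 : ℝ) := by
  ext t
  simp only [wedgeVec_apply, WithLp.ofLp_sum, WithLp.ofLp_smul, Finset.sum_apply,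
    Pi.smul_apply, PiLp.ofLp_single, Pi.single_apply, smul_eq_mul, mul_ite, mul_one,
    mul_zero]
  rw [← Finset.sum_filter, ← Finset.sum_filter]
  refine Finset.sum_congr ?_ fun i hi => ?_
  · ext i
    simp only [Finset.mem_filter, Finset.mem_compl]
    constructor
    · rintro ⟨hit, rfl⟩
      exact ⟨Finset.notMem_erase i t, (Finset.insert_erase hit).symm⟩
    · rintro ⟨his, rfl⟩
      exact ⟨Finset.mem_insert_self i s, Finset.erase_insert his⟩
  · obtain ⟨his, rfl⟩ := Finset.mem_filter.mp hi
    rw [Finset.erase_insert (Finset.mem_compl.mp his)]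

lemma inner_intProd_left (x : V n) (α β : Ext n) :
    ⟪intProd x α, β⟫ = ⟪α, wedgeVec x β⟫ :=
  LinearMap.adjoint_inner_left _ _ _

lemma intProd_apply (x : V n) (α : Ext n) (s : Finset (Fin n)) :
    intProd x α s = ∑ i ∈ sᶜ, esign s i * x i * α (insert i s) := by
  have h := inner_intProd_left x α (EuclideanSpace.single s 1)
  simp only [EuclideanSpace.inner_single_right, wedgeVec_single, inner_sum, inner_smul_right,
    one_mul, conj_trivial] at h
  exact h

lemma wedgeVec_add (x y : V n) : wedgeVec (x + y) = wedgeVec x + wedgeVec y := by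
  ext α s
  simp only [LinearMap.add_apply, PiLp.add_apply, wedgeVec_apply, ← Finset.sum_add_distrib]
  exact Finset.sum_congr rfl fun i _ => by ring

lemma wedgeVec_smul (c : ℝ) (x : V n) : wedgeVec (c • x) = c • wedgeVec x := by
  ext α s
  simp only [LinearMap.smul_apply, PiLp.smul_apply, wedgeVec_apply, smul_eq_mul, Finset.mul_sum]
  exact Finset.sum_congr rfl fun i _ => by ring

lemma intProd_add (x y : V n) : intProd (x + y) = intProd x + intProd y := by
  rw [intProd, wedgeVec_add, map_add]; rfl

lemma intProd_smul (c : ℝ) (x : V n) : intProd (c • x) = c • intProd x := by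
  rw [intProd, wedgeVec_smul, map_smulₛₗ, starRingEnd_apply, star_trivial]; rfl

lemma intProd_wedgeVec_apply (x y : V n) (α : Ext n) (s : Finset (Fin n)) :
    intProd x (wedgeVec y α) s = (∑ i ∈ sᶜ, x i * y i) * α s
      - ∑ j ∈ s, ∑ i ∈ sᶜ, esign (s.erase j) j * esign (s.erase j) i *
          (x i * y j * α (insert i (s.erase j))) := by
  rw [intProd_apply, Finset.sum_mul, Finset.sum_comm (s := s), ← Finset.sum_sub_distrib]
  refine Finset.sum_congr rfl fun i hi => ?_
  have hi' : i ∉ s := Finset.mem_compl.mp hi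
  rw [wedgeVec_apply, Finset.sum_insert hi',
    Finset.erase_insert hi', mul_add, Finset.mul_sum, sub_eq_add_neg, ← Finset.sum_neg_distrib]
  congr 1
  · linear_combination (x i * y i * α s) * esign_mul_self s i
  · refine Finset.sum_congr rfl fun j hj => ?_
    rw [Finset.erase_insert_of_ne (ne_of_mem_of_not_mem hj hi').symm]
    linear_combination (x i * y j * α (insert i (s.erase j))) * esign_mul_esign_insert_erase hi' hj

lemma wedgeVec_intProd_apply (x y : V n) (α : Ext n) (s : Finset (Fin n)) :
    wedgeVec y (intProd x α) s = (∑ j ∈ s, x j * y j) * α s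
      + ∑ j ∈ s, ∑ i ∈ sᶜ, esign (s.erase j) j * esign (s.erase j) i *
          (x i * y j * α (insert i (s.erase j))) := by
  rw [wedgeVec_apply, Finset.sum_mul, ← Finset.sum_add_distrib]
  refine Finset.sum_congr rfl fun j hj => ?_
  rw [intProd_apply, Finset.compl_erase, Finset.sum_insert (Finset.notMem_compl.mpr hj),
    Finset.insert_erase hj, mul_add, Finset.mul_sum]
  congr 1
  · linear_combination (x j * y j * α s) * esign_mul_self (s.erase j) j
  · exact Finset.sum_congr rfl fun i _ => by ring

lemma inner_eq_sum_mul (x y : V n) : ⟪x, y⟫ = ∑ i, x i * y i := by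
  simp [PiLp.inner_apply, mul_comm]

theorem intProd_wedgeVec_add_wedgeVec_intProd (x y : V n) (α : Ext n) :
    intProd x (wedgeVec y α) + wedgeVec y (intProd x α) = ⟪x, y⟫ • α := by
  ext s
  rw [PiLp.add_apply, intProd_wedgeVec_apply, wedgeVec_intProd_apply, PiLp.smul_apply, smul_eq_mul,
    inner_eq_sum_mul, ← Finset.sum_compl_add_sum s]
  ring

lemma wedgeVec_wedgeVec_apply (x y : V n) (α : Ext n) (s : Finset (Fin n)) :
    wedgeVec x (wedgeVec y α) s = ∑ i ∈ s, ∑ j ∈ s, if j ≠ i then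
      esign (s.erase i) i * esign ((s.erase i).erase j) j * (x i * y j * α ((s.erase i).erase j))
      else 0 := by
  rw [wedgeVec_apply]
  refine Finset.sum_congr rfl fun i _ => ?_
  rw [wedgeVec_apply, Finset.mul_sum, ← Finset.sum_filter, Finset.filter_ne']
  exact Finset.sum_congr rfl fun j _ => by ring

lemma wedgeVec_wedgeVec_comm (x y : V n) (α : Ext n) :
    wedgeVec x (wedgeVec y α) = -wedgeVec y (wedgeVec x α) := by
  ext s
  rw [PiLp.neg_apply, wedgeVec_wedgeVec_apply, wedgeVec_wedgeVec_apply, Finset.sum_comm,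
    ← Finset.sum_neg_distrib]
  refine Finset.sum_congr rfl fun j hj => ?_
  rw [← Finset.sum_neg_distrib]
  refine Finset.sum_congr rfl fun i hi => ?_
  by_cases hij : i = j
  · simp [hij]
  · have hs := esign_mul_esign_erase_erase hi hj hij
    rw [if_pos (Ne.symm hij), if_pos hij, Finset.erase_right_comm (a := j)] at *
    linear_combination (x i * y j * α ((s.erase i).erase j)) * hs

lemma wedgeVec_wedgeVec_self (x : V n) (α : Ext n) : wedgeVec x (wedgeVec x α) = 0 := by
  have h := wedgeVec_wedgeVec_comm x x α
  rwa [eq_neg_iff_add_eq_zero, ← two_smul ℝ, smul_eq_zero, or_iff_right two_ne_zero] at h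

lemma single_empty_mem_extSub (P : Submodule ℝ (V n)) :
    EuclideanSpace.single (∅ : Finset (Fin n)) (1 : ℝ) ∈ extSub P :=
  Submodule.subset_span ⟨[], by simp, rfl⟩

lemma wedgeVec_mem_extSub {P : Submodule ℝ (V n)} {v : V n} (hv : v ∈ P) {α : Ext n}
    (hα : α ∈ extSub P) : wedgeVec v α ∈ extSub P := by
  induction hα using Submodule.span_induction with
  | mem β hβ =>
    obtain ⟨l, hl, rfl⟩ := hβ
    exact Submodule.subset_span ⟨v :: l, List.forall_mem_cons.mpr ⟨hv, hl⟩, rfl⟩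
  | zero => simp
  | add β γ _ _ hβ hγ => simpa using add_mem hβ hγ
  | smul c β _ hβ => simpa using Submodule.smul_mem _ c hβ

lemma intProd_single_empty (x : V n) :
    intProd x (EuclideanSpace.single (∅ : Finset (Fin n)) (1 : ℝ)) = 0 := by
  ext s
  simp [intProd_apply]

lemma intProd_eq_zero_of_mem_extSub_hyp {x : V n} {α : Ext n} (hα : α ∈ extSub (hyp x)) :
    intProd x α = 0 := by
  induction hα using Submodule.span_induction with
  | mem β hβ =>
    obtain ⟨l, hl, rfl⟩ := hβ
    induction l with
    | nil => exact intProd_single_empty x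
    | cons v l ih =>
      obtain ⟨hv, hl⟩ := List.forall_mem_cons.mp hl
      have h := intProd_wedgeVec_add_wedgeVec_intProd x v (wedgeList l)
      rwa [ih hl, map_zero, add_zero, hv x (Submodule.mem_span_singleton_self x), zero_smul] at h
  | zero => simp
  | add β γ _ _ hβ hγ => rw [map_add, hβ, hγ, add_zero]
  | smul c β _ hβ => rw [map_smul, hβ, smul_zero]

lemma intProd_wedgeVec_self_of_mem_extSub_hyp {x : V n} {β : Ext n} (hβ : β ∈ extSub (hyp x)) :
    intProd x (wedgeVec x β) = ‖x‖ ^ 2 • β := by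
  have h := intProd_wedgeVec_add_wedgeVec_intProd x x β
  rwa [intProd_eq_zero_of_mem_extSub_hyp hβ, map_zero, add_zero, real_inner_self_eq_norm_sq] at h

lemma wedgeVec_mem_orthogonal_extSub_hyp (x : V n) (β : Ext n) :
    wedgeVec x β ∈ (extSub (hyp x))ᗮ := fun a ha => by
  rw [← inner_intProd_left, intProd_eq_zero_of_mem_extSub_hyp ha, inner_zero_left]

lemma wedgeVec_single_single (j : Fin n) (s : Finset (Fin n)) :
    wedgeVec (EuclideanSpace.single j 1) (EuclideanSpace.single s 1) =
      if j ∈ s then 0 else esign s j • EuclideanSpace.single (insert j s) (1 : ℝ) := by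
  rw [wedgeVec_single]
  split_ifs with hj
  · refine Finset.sum_eq_zero fun i hi => ?_
    rw [PiLp.single_apply, if_neg (ne_of_mem_of_not_mem hj (Finset.mem_compl.mp hi)).symm,
      mul_zero, zero_smul]
  · rw [Finset.sum_eq_single_of_mem j (Finset.mem_compl.mpr hj) fun i _ hij => by
      rw [PiLp.single_apply, if_neg hij, mul_zero, zero_smul]]
    simp

lemma esign_eq_one_of_forall_lt {s : Finset (Fin n)} {j : Fin n} (h : ∀ i ∈ s, j < i) :
    esign s j = 1 := by
  rw [esign, Finset.filter_false_of_mem fun i hi => (h i hi).not_gt, Finset.card_empty, pow_zero]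

lemma wedgeVec_mem_extSub_hyp_sup (x v : V n) {γ : Ext n}
    (hγ : γ ∈ extSub (hyp x) ⊔ (extSub (hyp x)).map (wedgeVec x)) :
    wedgeVec v γ ∈ extSub (hyp x) ⊔ (extSub (hyp x)).map (wedgeVec x) := by
  obtain ⟨a, ha, _, ⟨β, hβ, rfl⟩, rfl⟩ := Submodule.mem_sup.mp hγ
  obtain ⟨_, hu, h, hh, rfl⟩ := Submodule.mem_sup.mp
    ((ℝ ∙ x).sup_orthogonal_of_hasOrthogonalProjection.ge (Submodule.mem_top (x := v)))
  obtain ⟨c, rfl⟩ := Submodule.mem_span_singleton.mp hu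
  -- `(c x + h) ∧ (a + x ∧ β) = h ∧ a + x ∧ (c a - h ∧ β)` with `h ⊥ x`
  refine Submodule.mem_sup.mpr ⟨wedgeVec h a, wedgeVec_mem_extSub hh ha,
    wedgeVec x (c • a - wedgeVec h β),
    Submodule.mem_map_of_mem (sub_mem (Submodule.smul_mem _ c ha) (wedgeVec_mem_extSub hh hβ)), ?_⟩
  simp only [wedgeVec_add, wedgeVec_smul, LinearMap.add_apply, LinearMap.smul_apply, map_add,
    map_sub, map_smul, wedgeVec_wedgeVec_self, wedgeVec_wedgeVec_comm h x]
  module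

lemma extSub_hyp_sup_map_wedgeVec_eq_top (x : V n) :
    extSub (hyp x) ⊔ (extSub (hyp x)).map (wedgeVec x) = ⊤ := by
  rw [eq_top_iff, ← (EuclideanSpace.basisFun (Finset (Fin n)) ℝ).toBasis.span_eq,
    Submodule.span_le]
  rintro _ ⟨s, rfl⟩
  simp only [OrthonormalBasis.coe_toBasis, EuclideanSpace.basisFun_apply, SetLike.mem_coe]
  induction s using Finset.induction_on_min with
  | empty => exact Submodule.mem_sup_left (single_empty_mem_extSub _)
  | insert j s hj ih =>
    have h := wedgeVec_single_single j s
    rw [if_neg fun hjs => (hj j hjs).false, esign_eq_one_of_forall_lt hj, one_smul] at h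
    exact h ▸ wedgeVec_mem_extSub_hyp_sup x _ ih

lemma _root_.Submodule.starProjection_add_of_mem_of_mem_orthogonal {𝕜 E : Type*} [RCLike 𝕜]
    [NormedAddCommGroup E] [InnerProductSpace 𝕜 E] {K : Submodule 𝕜 E} [K.HasOrthogonalProjection]
    {a b : E} (ha : a ∈ K) (hb : b ∈ Kᗮ) : K.starProjection (a + b) = a := by
  rw [map_add, K.starProjection_eq_self_iff.mpr ha, K.starProjection_apply_eq_zero_iff.mpr hb,
    add_zero]

lemma subProj_apply (K : Submodule ℝ (Ext n)) (γ : Ext n) : subProj K γ = K.starProjection γ := rfl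

lemma exists_eq_add_wedgeVec (x : V n) (γ : Ext n) :
    ∃ a ∈ extSub (hyp x), ∃ β ∈ extSub (hyp x), γ = a + wedgeVec x β := by
  obtain ⟨a, ha, _, ⟨β, hβ, rfl⟩, h⟩ :=
    Submodule.mem_sup.mp ((extSub_hyp_sup_map_wedgeVec_eq_top x).ge (Submodule.mem_top (x := γ)))
  exact ⟨a, ha, β, hβ, h.symm⟩

lemma PiOp_add_wedgeVec {x : V n} {a : Ext n} (ha : a ∈ extSub (hyp x)) (β : Ext n) :
    PiOp x (a + wedgeVec x β) = a :=
  Submodule.starProjection_add_of_mem_of_mem_orthogonal ha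
    (wedgeVec_mem_orthogonal_extSub_hyp x β)

lemma PhiOp_add_wedgeVec {x : V n} {a β : Ext n} (ha : a ∈ extSub (hyp x))
    (hβ : β ∈ extSub (hyp x)) : PhiOp x (a + wedgeVec x β) = wedgeVec x β := by
  rw [PhiOp, subProj_apply, add_comm]
  refine Submodule.starProjection_add_of_mem_of_mem_orthogonal (Submodule.mem_map_of_mem hβ) ?_
  rintro _ ⟨δ, -, rfl⟩
  rw [real_inner_comm]
  exact wedgeVec_mem_orthogonal_extSub_hyp x δ a ha

lemma PiOp_add_PhiOp (x : V n) (γ : Ext n) : PiOp x γ + PhiOp x γ = γ := by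
  obtain ⟨a, ha, β, hβ, rfl⟩ := exists_eq_add_wedgeVec x γ
  rw [PiOp_add_wedgeVec ha, PhiOp_add_wedgeVec ha hβ]

lemma PiOp_apply {x : V n} (hx : x ≠ 0) (γ : Ext n) :
    PiOp x γ = (‖x‖ ^ 2)⁻¹ • intProd x (wedgeVec x γ) := by
  obtain ⟨a, ha, β, hβ, rfl⟩ := exists_eq_add_wedgeVec x γ
  rw [PiOp_add_wedgeVec ha, map_add, map_add, wedgeVec_wedgeVec_self, map_zero, add_zero,
    intProd_wedgeVec_self_of_mem_extSub_hyp ha, inv_smul_smul₀ (by positivity)]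

lemma intProd_single_single_of_notMem {j : Fin n} {s : Finset (Fin n)} (hj : j ∉ s) :
    intProd (EuclideanSpace.single j 1) (EuclideanSpace.single s (1 : ℝ)) = 0 := by
  ext u
  simp only [intProd_apply, PiLp.single_apply, PiLp.zero_apply, mul_ite, mul_one, mul_zero]
  refine Finset.sum_eq_zero fun i _ => ?_
  split_ifs with hs hij
  · exact absurd (hij ▸ hs ▸ Finset.mem_insert_self i u) hj
  all_goals rfl

lemma intProd_wedgeVec_single_single (j : Fin n) (s : Finset (Fin n)) :
    intProd (EuclideanSpace.single j 1) (wedgeVec (EuclideanSpace.single j 1)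
      (EuclideanSpace.single s 1)) = if j ∈ s then 0 else EuclideanSpace.single s (1 : ℝ) := by
  split_ifs with hj
  · rw [wedgeVec_single_single, if_pos hj, map_zero]
  · have h := intProd_wedgeVec_add_wedgeVec_intProd (EuclideanSpace.single j 1)
      (EuclideanSpace.single j 1) (EuclideanSpace.single s 1)
    rwa [intProd_single_single_of_notMem hj, map_zero, add_zero, real_inner_self_eq_norm_sq,
      PiLp.norm_single, norm_one, one_pow, one_smul] at h

def codegreeOp (n : ℕ) : Ext n →ₗ[ℝ] Ext n :=
  ∑ j : Fin n, intProd (EuclideanSpace.single j 1) ∘ₗ wedgeVec (EuclideanSpace.single j 1)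

lemma codegreeOp_single (s : Finset (Fin n)) :
    codegreeOp n (EuclideanSpace.single s 1) = ((n : ℝ) - s.card) • EuclideanSpace.single s 1 := by
  simp only [codegreeOp, LinearMap.sum_apply, LinearMap.comp_apply,
    intProd_wedgeVec_single_single]
  rw [Finset.sum_ite, Finset.sum_const_zero, zero_add, Finset.sum_const]
  simp only [Finset.filter_not, Finset.filter_mem_eq_inter, Finset.univ_inter,
    ← Finset.compl_eq_univ_sdiff, Finset.card_compl, Fintype.card_fin]
  rw [← Nat.cast_smul_eq_nsmul ℝ, Nat.cast_sub (s.card_le_univ.trans_eq (Fintype.card_fin n))]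

lemma codegreeOp_of_mem_grade {p : ℕ} {α : Ext n} (hα : α ∈ grade n p) :
    codegreeOp n α = ((n : ℝ) - p) • α := by
  induction hα using Submodule.span_induction with
  | mem β hβ =>
    obtain ⟨s, rfl, rfl⟩ := hβ
    exact codegreeOp_single s
  | zero => simp
  | add β γ _ _ hβ hγ => rw [map_add, hβ, hγ, smul_add]
  | smul c β _ hβ => rw [map_smul, hβ, smul_comm]

def harmonicForm (n : ℕ) : V n →ₗ[ℝ] V n →ₗ[ℝ] (Ext n →ₗ[ℝ] Ext n) :=
  LinearMap.mk₂ ℝ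
    (fun x y => (2 : ℝ)⁻¹ • (intProd x ∘ₗ wedgeVec y + intProd y ∘ₗ wedgeVec x)
      - (⟪x, y⟫ / n) • codegreeOp n)
    (fun x x' y => by
      rw [intProd_add, wedgeVec_add, LinearMap.add_comp, LinearMap.comp_add, inner_add_left,
        add_div, add_smul]
      module)
    (fun c x y => by
      rw [intProd_smul, wedgeVec_smul, LinearMap.smul_comp, LinearMap.comp_smul,
        real_inner_smul_left, mul_div_assoc, mul_smul]
      module)
    (fun x y y' => by
      rw [intProd_add, wedgeVec_add, LinearMap.add_comp, LinearMap.comp_add, inner_add_right,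
        add_div, add_smul]
      module)
    (fun c x y => by
      rw [intProd_smul, wedgeVec_smul, LinearMap.smul_comp, LinearMap.comp_smul,
        real_inner_smul_right, mul_div_assoc, mul_smul]
      module)

lemma harmonicForm_self (x : V n) :
    harmonicForm n x x = intProd x ∘ₗ wedgeVec x - (‖x‖ ^ 2 / n) • codegreeOp n := by
  rw [harmonicForm, LinearMap.mk₂_apply, real_inner_self_eq_norm_sq, ← two_smul ℝ, smul_smul,
    inv_mul_cancel₀ two_ne_zero, one_smul]

lemma sum_harmonicForm_single_single (n : ℕ) :
    ∑ j : Fin n, harmonicForm n (EuclideanSpace.single j 1) (EuclideanSpace.single j 1) = 0 := by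
  simp only [harmonicForm_self, PiLp.norm_single, norm_one, one_pow, Finset.sum_sub_distrib,
    Finset.sum_const, Finset.card_univ, Fintype.card_fin, ← Nat.cast_smul_eq_nsmul ℝ,
    smul_smul]
  rcases eq_or_ne n 0 with rfl | hn
  · simp [codegreeOp]
  · rw [mul_one_div_cancel (Nat.cast_ne_zero.mpr hn), one_smul]
    exact sub_eq_zero.mpr rfl

lemma harmonicForm_self_apply_of_mem_grade (x : V n) {p : ℕ} {α : Ext n} (hα : α ∈ grade n p) :
    harmonicForm n x x α = intProd x (wedgeVec x α) - (‖x‖ ^ 2 * ((n - p) / n)) • α := by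
  rw [harmonicForm_self, LinearMap.sub_apply, LinearMap.smul_apply, codegreeOp_of_mem_grade hα,
    LinearMap.comp_apply, smul_smul, div_mul_eq_mul_div, mul_div_assoc]

end Xray

open Xray in
/-- `H(x) = T x x`; the entries of `H` are harmonic exactly when `∑ i, T eᵢ eᵢ = 0`. -/
theorem stmt14_general (n p : ℕ) :
    ∃ T : V n →ₗ[ℝ] V n →ₗ[ℝ] (Ext n →ₗ[ℝ] Ext n),
      (∑ i : Fin n, T (EuclideanSpace.single i 1) (EuclideanSpace.single i 1) = 0) ∧
      ∀ x : V n, x ≠ 0 → ∀ α ∈ grade n p,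
        PiOp x α = (((n : ℝ) - p) / n) • α + (‖x‖ ^ 2)⁻¹ • (T x x) α ∧
        PhiOp x α = ((p : ℝ) / n) • α - (‖x‖ ^ 2)⁻¹ • (T x x) α := by
  refine ⟨harmonicForm n, sum_harmonicForm_single_single n, fun x hx α hα => ?_⟩
  have hn : (n : ℝ) ≠ 0 := by
    rintro h
    obtain rfl := Nat.cast_eq_zero.mp h
    exact hx (Subsingleton.elim _ _)
  have hPi : PiOp x α = (((n : ℝ) - p) / n) • α + (‖x‖ ^ 2)⁻¹ • harmonicForm n x x α := by
    rw [PiOp_apply hx, harmonicForm_self_apply_of_mem_grade x hα, smul_sub, smul_smul,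
      inv_mul_cancel_left₀ (by positivity)]
    abel
  refine ⟨hPi, ?_⟩
  rw [eq_sub_of_add_eq' (PiOp_add_PhiOp x α), hPi,
    show (p : ℝ) / n = 1 - (n - p) / n by field_simp; ring, sub_smul, one_smul]
  abel

open Xray in
/-- for `0 ≤ p ≤ n` there is an operator field `H(x) = T x x` on `Λᵖℝⁿ`,
homogeneously quadratic in `x` (entries `x ↦ ⟪T x x α, β⟫` are homogeneous quadratic
polynomials) and harmonic (equivalently `∑ i, T eᵢ eᵢ = 0`), such that for all `x ≠ 0`,
on `Λᵖℝⁿ`: `Π_x = ((n-p)/n)·I + |x|⁻² H(x)` and `Φ_x = (p/n)·I − |x|⁻² H(x)`. -/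
theorem stmt14 (n p : ℕ) (hp : p ≤ n) :
    ∃ T : V n →ₗ[ℝ] V n →ₗ[ℝ] (Ext n →ₗ[ℝ] Ext n),
      (∑ i : Fin n, T (EuclideanSpace.single i 1) (EuclideanSpace.single i 1) = 0) ∧
      ∀ x : V n, x ≠ 0 → ∀ α ∈ grade n p,
        PiOp x α = (((n : ℝ) - p) / n) • α + (‖x‖ ^ 2)⁻¹ • (T x x) α ∧
        PhiOp x α = ((p : ℝ) / n) • α - (‖x‖ ^ 2)⁻¹ • (T x x) α :=
  stmt14_general n p
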